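/- Assume N > 1 and there exists θ⁰ such that for every x ∈ Ω, h_{θ⁰_{G(x)}}(x) < h_{θ⁰_j}(x) for all j ≠ G(x) (strict perfect separation). Then for any fixed ε > 0, sup_θ Φ^G_ε(θ) = 0, and the supremum is not attained: Φ^G_ε(θ) < 0 for every θ ∈ ℝ^{K×N}. -/

import Mathlib

open Matrix Real

/-- Softmax (smeared-out) assignment probabilities for a linear PMD. -/
noncomputable def softp {Ω : Type*} [Fintype Ω] {K N : ℕ}
    (η : Ω → Fin K → ℝ) (ε : ℝ) (θ : Fin N → Fin K → ℝ) (i : Fin N) (x : Ω) : ℝ :=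
  Real.exp (-(θ i ⬝ᵥ η x) / ε) / ∑ j, Real.exp (-(θ j ⬝ᵥ η x) / ε)

/-- The multinomial logistic objective Φ^G_ε. -/
noncomputable def Phi {Ω : Type*} [Fintype Ω] {K N : ℕ}
    (η : Ω → Fin K → ℝ) (G : Ω → Fin N) (ε : ℝ) (θ : Fin N → Fin K → ℝ) : ℝ :=
  (1 / (Fintype.card Ω : ℝ)) * ∑ x, Real.log (softp η ε θ (G x) x)

/-!
Every softmax probability lies strictly between `0` and `1` once there are at least two classes,
so `Φ` is an average of negative logarithms and hence negative. Along the ray `t • θ⁰` through a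
strictly separating parameter, the probability of the correct class is
`(∑ⱼ exp (t (θ⁰_G·η - θ⁰_j·η) / ε))⁻¹`, in which every term with `j ≠ G` decays to `0`; so each
probability tends to `1` and `Φ (t • θ⁰) → 0`, which pins the supremum at `0`.
-/

open Filter Topology

section Softmax

variable {Ω : Type*} [Fintype Ω] {K N : ℕ} (η : Ω → Fin K → ℝ) (ε : ℝ)

lemma softp_pos [NeZero N] (θ : Fin N → Fin K → ℝ) (i : Fin N) (x : Ω) :
    0 < softp η ε θ i x :=
  div_pos (exp_pos _) (Finset.sum_pos (fun _ _ => exp_pos _) Finset.univ_nonempty)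

lemma softp_lt_one (hN : 1 < N) (θ : Fin N → Fin K → ℝ) (i : Fin N) (x : Ω) :
    softp η ε θ i x < 1 := by
  have : Nontrivial (Fin N) := Fin.nontrivial_iff_two_le.mpr hN
  obtain ⟨j, hji⟩ := exists_ne i
  rw [softp, div_lt_one (Finset.sum_pos (fun _ _ => exp_pos _) Finset.univ_nonempty)]
  exact Finset.single_lt_sum (f := fun k => exp (-(θ k ⬝ᵥ η x) / ε)) hji (Finset.mem_univ i)
    (Finset.mem_univ j) (exp_pos _) fun _ _ _ => (exp_pos _).le

lemma softp_eq_inv_sum_exp (θ : Fin N → Fin K → ℝ) (i : Fin N) (x : Ω) :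
    softp η ε θ i x = (∑ j, exp ((θ i ⬝ᵥ η x - θ j ⬝ᵥ η x) / ε))⁻¹ := by
  have hterm : ∀ j, exp ((θ i ⬝ᵥ η x - θ j ⬝ᵥ η x) / ε)
      = exp (-(θ j ⬝ᵥ η x) / ε) / exp (-(θ i ⬝ᵥ η x) / ε) := by
    intro j
    rw [← exp_sub]
    ring_nf
  simp only [softp, hterm, ← Finset.sum_div, inv_div]

lemma tendsto_exp_mul_atTop_of_neg {c : ℝ} (hc : c < 0) :
    Tendsto (fun t : ℝ => exp (t * c)) atTop (𝓝 0) :=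
  tendsto_exp_atBot.comp (tendsto_id.atTop_mul_const_of_neg hc)

lemma tendsto_softp_smul_of_forall_lt (hε : 0 < ε) {θ : Fin N → Fin K → ℝ} {i : Fin N} {x : Ω}
    (hsep : ∀ j, j ≠ i → θ i ⬝ᵥ η x < θ j ⬝ᵥ η x) :
    Tendsto (fun t : ℝ => softp η ε (t • θ) i x) atTop (𝓝 1) := by
  have hscale : ∀ (t : ℝ) (j : Fin N), ((t • θ) i ⬝ᵥ η x - (t • θ) j ⬝ᵥ η x) / ε
      = t * ((θ i ⬝ᵥ η x - θ j ⬝ᵥ η x) / ε) := by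
    intro t j
    simp only [Pi.smul_apply, smul_dotProduct, smul_eq_mul]
    ring
  have hterm : ∀ j, Tendsto (fun t : ℝ => exp (t * ((θ i ⬝ᵥ η x - θ j ⬝ᵥ η x) / ε))) atTop
      (𝓝 (if j = i then 1 else 0)) := by
    intro j
    split_ifs with hji
    · simp [hji]
    · exact tendsto_exp_mul_atTop_of_neg (div_neg_of_neg_of_pos (sub_neg.mpr (hsep j hji)) hε)
  have hsum := (tendsto_finsetSum Finset.univ fun j _ => hterm j).inv₀ (by simp)
  simp_rw [softp_eq_inv_sum_exp, hscale]
  simpa using hsum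

end Softmax

section Objective

variable {Ω : Type*} [Fintype Ω] {K N : ℕ} (η : Ω → Fin K → ℝ) (G : Ω → Fin N) (ε : ℝ)

lemma Phi_neg [Nonempty Ω] (hN : 1 < N) (θ : Fin N → Fin K → ℝ) : Phi η G ε θ < 0 := by
  have : NeZero N := ⟨by omega⟩
  refine mul_neg_of_pos_of_neg (by simp [Fintype.card_pos]) ?_
  exact Finset.sum_neg (fun x _ => log_neg (softp_pos η ε θ _ x) (softp_lt_one η ε hN θ _ x))
    Finset.univ_nonempty

lemma tendsto_Phi_smul_of_separating (hε : 0 < ε) {θ : Fin N → Fin K → ℝ}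
    (hsep : ∀ x : Ω, ∀ j : Fin N, j ≠ G x → θ (G x) ⬝ᵥ η x < θ j ⬝ᵥ η x) :
    Tendsto (fun t : ℝ => Phi η G ε (t • θ)) atTop (𝓝 0) := by
  have hlog : ∀ x, Tendsto (fun t : ℝ => log (softp η ε (t • θ) (G x) x)) atTop (𝓝 0) := by
    intro x
    simpa using (tendsto_softp_smul_of_forall_lt η ε hε (hsep x)).log one_ne_zero
  simpa [Phi] using ((tendsto_finsetSum Finset.univ fun x _ => hlog x).const_mul
    (1 / (Fintype.card Ω : ℝ)))

end Objective

theorem sup_not_attained {Ω : Type*} [Fintype Ω] [Nonempty Ω] {K N : ℕ} (hN : 1 < N)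
    (η : Ω → Fin K → ℝ) (G : Ω → Fin N) (ε : ℝ) (hε : 0 < ε)
    (θ0 : Fin N → Fin K → ℝ)
    (hsep : ∀ x : Ω, ∀ j : Fin N, j ≠ G x → θ0 (G x) ⬝ᵥ η x < θ0 j ⬝ᵥ η x) :
    (⨆ θ : Fin N → Fin K → ℝ, Phi η G ε θ) = 0 ∧
      ∀ θ : Fin N → Fin K → ℝ, Phi η G ε θ < 0 := by
  have hneg := Phi_neg η G ε hN
  have hbdd : BddAbove (Set.range fun θ => Phi η G ε θ) :=
    ⟨0, by rintro _ ⟨θ, rfl⟩; exact (hneg θ).le⟩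
  refine ⟨le_antisymm (ciSup_le fun θ => (hneg θ).le) ?_, hneg⟩
  exact le_of_tendsto' (tendsto_Phi_smul_of_separating η G ε hε hsep)
    fun t => le_ciSup hbdd (t • θ0)
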